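/- Let n, k, m be integers with k ≥ 3, n sufficiently large, and n/(2k^4) ≤ m < n/k. Let 0 < ε < 1/k and 0 < ϱ < ε/12. Let H be a k-uniform hypergraph on n vertices with δ_1(H) ≥ C(n−1, k−1) − C(n−m, k−1) − ϱ n^{k−1}, and suppose H does not ε-contain H_k(n, m). Then for every S ⊆ V(H) with |S| ≥ (1 − m/n − ε/7) n, the induced subhypergraph H[S] has at least ε n^k / (2k^2) edges. -/

import Mathlib

/-!
Put `U = V \ W`, where `W` is chosen with `|W| = m - 1` and as much of `V \ S` inside `W` as
possible. A vertex `u ∈ U` lies in `C(n-1,k-1) - C(n-m,k-1)` crossing `k`-sets, so by the degree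
condition all but `ϱ n^{k-1}` of them are edges, up to the edges through `u` lying inside `U`.
Summing over `U`, the more than `ε n^k` missing crossing sets force about `ε n^k / k` edges inside
`U`. Removing the at most `ε n / 7 + 1` vertices of `U \ S` destroys at most
`n^{k-1} / (k-1)` edges each, which leaves `ε n^k / (2k^2)` edges inside `S`.
-/

open Finset

namespace Finset

variable {α : Type*} [DecidableEq α]

lemma sum_card_filter_mem (U : Finset α) (F : Finset (Finset α)) :
    ∑ u ∈ U, #{e ∈ F | u ∈ e} = ∑ e ∈ F, #(U ∩ e) := by
  simp_rw [← filter_mem_eq_inter, card_eq_sum_ones, sum_filter]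
  exact sum_comm

lemma card_le_sum_card_filter_mem {U : Finset α} {F : Finset (Finset α)}
    (hF : ∀ e ∈ F, (U ∩ e).Nonempty) : #F ≤ ∑ u ∈ U, #{e ∈ F | u ∈ e} := by
  rw [sum_card_filter_mem, card_eq_sum_ones]
  exact sum_le_sum fun e he => card_pos.mpr (hF e he)

lemma sum_card_filter_mem_le {U : Finset α} {F : Finset (Finset α)} {k : ℕ}
    (hF : ∀ e ∈ F, #e ≤ k) : ∑ u ∈ U, #{e ∈ F | u ∈ e} ≤ k * #F := by
  rw [sum_card_filter_mem, mul_comm, ← smul_eq_mul, ← sum_const]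
  exact sum_le_sum fun e he => (card_le_card inter_subset_right).trans (hF e he)

lemma card_powersetCard_filter_mem {V : Finset α} {v : α} {k : ℕ} (hv : v ∈ V) (hk : 1 ≤ k) :
    #{e ∈ V.powersetCard k | v ∈ e} = (#V - 1).choose (k - 1) := by
  simpa [singleton_subset_iff] using
    card_filter_powersetCard_subset {v} V k (singleton_subset_iff.mpr hv) (by simpa using hk)

lemma card_filter_mem_le_choose {V : Finset α} {E : Finset (Finset α)} {v : α} {k : ℕ}
    (hE : E ⊆ V.powersetCard k) (hv : v ∈ V) (hk : 1 ≤ k) :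
    #{e ∈ E | v ∈ e} ≤ (#V - 1).choose (k - 1) :=
  card_powersetCard_filter_mem hv hk ▸ card_le_card (filter_subset_filter _ hE)

lemma card_filter_subset_le {V U : Finset α} {E : Finset (Finset α)} {k : ℕ}
    (hE : E ⊆ V.powersetCard k) (hU : U ⊆ V) (hk : 1 ≤ k) (S : Finset α) :
    #{e ∈ E | e ⊆ U} ≤ #{e ∈ E | e ⊆ S} + #(U \ S) * (#V - 1).choose (k - 1) := by
  have hcover :
      {e ∈ E | e ⊆ U} ⊆ {e ∈ E | e ⊆ S} ∪ (U \ S).biUnion fun d => {e ∈ E | d ∈ e} := by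
    intro e he
    obtain ⟨heE, heU⟩ := mem_filter.mp he
    by_cases heS : e ⊆ S
    · exact mem_union_left _ (mem_filter.mpr ⟨heE, heS⟩)
    · obtain ⟨d, hde, hdS⟩ := not_subset.mp heS
      exact mem_union_right _ (mem_biUnion.mpr
        ⟨d, mem_sdiff.mpr ⟨heU hde, hdS⟩, mem_filter.mpr ⟨heE, hde⟩⟩)
  calc #{e ∈ E | e ⊆ U}
      ≤ #{e ∈ E | e ⊆ S} + ∑ d ∈ U \ S, #{e ∈ E | d ∈ e} :=
        (card_le_card hcover).trans <| (card_union_le _ _).trans <| by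
          gcongr; exact card_biUnion_le
    _ ≤ #{e ∈ E | e ⊆ S} + ∑ _d ∈ U \ S, (#V - 1).choose (k - 1) := by
        gcongr with d hd
        exact card_filter_mem_le_choose hE (hU (mem_sdiff.mp hd).1) hk
    _ = _ := by rw [sum_const, smul_eq_mul]

lemma exists_subset_card_eq_card_sdiff_sdiff {S V : Finset α} {w : ℕ} (hSV : S ⊆ V)
    (hw : w ≤ #V) : ∃ W ⊆ V, #W = w ∧ #((V \ W) \ S) = #V - #S - w := by
  rw [← card_sdiff_of_subset hSV]
  rcases le_total #(V \ S) w with hTw | hwT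
  · obtain ⟨W, hTW, hWV, hW⟩ := exists_subsuperset_card_eq sdiff_subset hTw hw
    refine ⟨W, hWV, hW, ?_⟩
    rw [sdiff_sdiff_comm, sdiff_eq_empty_iff_subset.mpr hTW, card_empty]
    omega
  · obtain ⟨W, hWT, hW⟩ := exists_subset_card_eq hwT
    exact ⟨W, hWT.trans sdiff_subset, hW, by rw [sdiff_sdiff_comm, card_sdiff_of_subset hWT, hW]⟩

end Finset

theorem Nat.mul_choose_le_pow (n r : ℕ) : r * n.choose r ≤ n ^ r :=
  calc r * n.choose r ≤ r.factorial * n.choose r := Nat.mul_le_mul_right _ r.self_le_factorial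
    _ = n.descFactorial r := (n.descFactorial_eq_factorial_mul_choose r).symm
    _ ≤ n ^ r := n.descFactorial_le_pow r

section Crossing

variable {α : Type*} [DecidableEq α]

/-- The edges of the hypergraph `H_{k,k-1}(V \ W, W)`. -/
def crossingSets (V W : Finset α) (k : ℕ) : Finset (Finset α) :=
  {e ∈ V.powersetCard k | 1 ≤ #(e ∩ W) ∧ #(e ∩ W) ≤ k - 1}

lemma mem_crossingSets_iff_of_mem {V W e : Finset α} {k : ℕ} {u : α}
    (he : e ∈ V.powersetCard k) (hue : u ∈ e) (huW : u ∉ W) :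
    e ∈ crossingSets V W k ↔ ¬ e ⊆ V \ W := by
  obtain ⟨heV, hek⟩ := mem_powersetCard.mp he
  have hle : #(e ∩ W) ≤ k - 1 := by
    rw [← hek, ← card_erase_of_mem hue]
    exact card_le_card fun x hx => mem_erase.mpr
      ⟨fun hxu => huW (hxu ▸ (mem_inter.mp hx).2), (mem_inter.mp hx).1⟩
  rw [crossingSets, mem_filter, subset_sdiff, Nat.one_le_iff_ne_zero, Ne, card_eq_zero,
    ← disjoint_iff_inter_eq_empty]
  tauto

lemma card_crossingSets_filter_mem_add {V W : Finset α} {k : ℕ} {u : α}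
    (hu : u ∈ V) (huW : u ∉ W) (hk : 1 ≤ k) :
    #{e ∈ crossingSets V W k | u ∈ e} + (#(V \ W) - 1).choose (k - 1) =
      (#V - 1).choose (k - 1) := by
  set X := {e ∈ V.powersetCard k | u ∈ e}
  have hC : {e ∈ crossingSets V W k | u ∈ e} = {e ∈ X | ¬ e ⊆ V \ W} := by
    ext e
    simp only [X, mem_filter]
    constructor
    · rintro ⟨hC, hue⟩
      have he := (mem_filter.mp hC).1
      exact ⟨⟨he, hue⟩, (mem_crossingSets_iff_of_mem he hue huW).mp hC⟩
    · rintro ⟨⟨he, hue⟩, hsub⟩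
      exact ⟨(mem_crossingSets_iff_of_mem he hue huW).mpr hsub, hue⟩
  have hU : {e ∈ (V \ W).powersetCard k | u ∈ e} = {e ∈ X | e ⊆ V \ W} := by
    ext e
    simp only [X, mem_filter, mem_powersetCard, subset_sdiff]
    tauto
  rw [← card_powersetCard_filter_mem hu hk,
    ← card_powersetCard_filter_mem (mem_sdiff.mpr ⟨hu, huW⟩) hk, hC, hU, add_comm,
    card_filter_add_card_filter_not]

lemma card_filter_mem_sdiff_add {V W : Finset α} {E : Finset (Finset α)} {k : ℕ} {u : α}
    (hE : E ⊆ V.powersetCard k) (huW : u ∉ W) :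
    #{e ∈ crossingSets V W k \ E | u ∈ e} + #{e ∈ E | u ∈ e} =
      #{e ∈ crossingSets V W k | u ∈ e} + #{e ∈ {e ∈ E | e ⊆ V \ W} | u ∈ e} := by
  set X := {e ∈ crossingSets V W k | u ∈ e}
  set Y := {e ∈ E | u ∈ e}
  have hXY : {e ∈ crossingSets V W k \ E | u ∈ e} = X \ Y := by
    ext e
    simp only [X, Y, mem_filter, mem_sdiff]
    tauto
  have hYX : {e ∈ {e ∈ E | e ⊆ V \ W} | u ∈ e} = Y \ X := by
    ext e
    simp only [X, Y, mem_filter, mem_sdiff]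
    constructor
    · rintro ⟨⟨heE, hsub⟩, hue⟩
      exact ⟨⟨heE, hue⟩,
        fun hC => (mem_crossingSets_iff_of_mem (hE heE) hue huW).mp hC.1 hsub⟩
    · rintro ⟨⟨heE, hue⟩, hC⟩
      refine ⟨⟨heE, not_not.mp fun hsub => hC ⟨?_, hue⟩⟩, hue⟩
      exact (mem_crossingSets_iff_of_mem (hE heE) hue huW).mpr hsub
  rw [hXY, hYX, card_sdiff_add_card, union_comm, ← card_sdiff_add_card, add_comm]

lemma card_crossingSets_sdiff_le {V W : Finset α} {E : Finset (Finset α)} {k : ℕ} {δ : ℝ}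
    (hE : E ⊆ V.powersetCard k) (hk : 1 ≤ k)
    (hdeg : ∀ u ∈ V \ W, ((#V - 1).choose (k - 1) : ℝ) - (#(V \ W) - 1).choose (k - 1) - δ ≤
      #{e ∈ E | u ∈ e}) :
    (#(crossingSets V W k \ E) : ℝ) ≤ #(V \ W) * δ + k * #{e ∈ E | e ⊆ V \ W} := by
  have hmeet : ∀ e ∈ crossingSets V W k \ E, ((V \ W) ∩ e).Nonempty := by
    intro e he
    obtain ⟨hek, -, hle⟩ := mem_filter.mp (mem_sdiff.mp he).1
    obtain ⟨heV, hek⟩ := mem_powersetCard.mp hek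
    obtain ⟨x, hxe, hxW⟩ := not_subset.mp fun heW : e ⊆ W => by
      rw [inter_eq_left.mpr heW] at hle
      omega
    exact ⟨x, mem_inter.mpr ⟨mem_sdiff.mpr ⟨heV hxe, hxW⟩, hxe⟩⟩
  have hvertex : ∀ u ∈ V \ W,
      (#{e ∈ crossingSets V W k \ E | u ∈ e} : ℝ) ≤
        δ + #{e ∈ {e ∈ E | e ⊆ V \ W} | u ∈ e} := by
    intro u hu
    obtain ⟨huV, huW⟩ := mem_sdiff.mp hu
    have hsplit := congrArg (Nat.cast (R := ℝ)) (card_filter_mem_sdiff_add hE huW)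
    have hcount := congrArg (Nat.cast (R := ℝ)) (card_crossingSets_filter_mem_add huV huW hk)
    push_cast at hsplit hcount
    linarith [hdeg u hu]
  have hinside : ∀ e ∈ {e ∈ E | e ⊆ V \ W}, #e ≤ k := fun e he =>
    (mem_powersetCard.mp (hE (mem_filter.mp he).1)).2.le
  calc (#(crossingSets V W k \ E) : ℝ)
      ≤ ∑ u ∈ V \ W, (#{e ∈ crossingSets V W k \ E | u ∈ e} : ℝ) := by
        exact_mod_cast card_le_sum_card_filter_mem hmeet
    _ ≤ ∑ u ∈ V \ W, (δ + #{e ∈ {e ∈ E | e ⊆ V \ W} | u ∈ e}) := sum_le_sum hvertex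
    _ = #(V \ W) * δ + ∑ u ∈ V \ W, (#{e ∈ {e ∈ E | e ⊆ V \ W} | u ∈ e} : ℝ) := by
        rw [sum_add_distrib, sum_const, nsmul_eq_mul]
    _ ≤ #(V \ W) * δ + k * #{e ∈ E | e ⊆ V \ W} := by
        gcongr
        exact_mod_cast sum_card_filter_mem_le hinside

end Crossing

/-- The final count: `a` edges inside `V \ W`, `b` inside `S`, `c = C(n-1,k-1)`, `x = n^{k-1}`. -/
lemma le_of_missing_crossing_bounds {K N x a b c ε ϱ : ℝ} (hK : 3 ≤ K) (hϱ : ϱ < ε / 12)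
    (hN : 0 ≤ N) (hx : 0 ≤ x) (hεN : 2 * K ≤ ε * N)
    (hmiss : ε * N * x < ϱ * N * x + K * a) (hab : a ≤ b + (ε * N / 7 + 1) * c)
    (hc : (K - 1) * c ≤ x) :
    ε * N * x / (2 * K ^ 2) ≤ b := by
  set t := ε * N * x
  have hK0 : 0 < K := by linarith
  have ht : 0 ≤ t := mul_nonneg (by linarith) hx
  have ha : 11 * t ≤ 12 * K * a := by
    have : ϱ * N * x ≤ ε / 12 * N * x := by gcongr
    linarith
  have hab' : 2 * K * (K - 1) * (a - b) ≤ (2 * K / 7 + 1) * t := by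
    have h1 : (K - 1) * (a - b) ≤ (ε * N / 7 + 1) * x :=
      calc (K - 1) * (a - b) ≤ (K - 1) * ((ε * N / 7 + 1) * c) := by gcongr <;> linarith
        _ = (ε * N / 7 + 1) * ((K - 1) * c) := by ring
        _ ≤ (ε * N / 7 + 1) * x := mul_le_mul_of_nonneg_left hc (by linarith)
    have h2 : 2 * K * x ≤ t := by simpa [t, mul_assoc] using mul_le_mul_of_nonneg_right hεN hx
    nlinarith
  -- `65 K² - 161 K + 42 ≥ 0` for `K ≥ 3` is what makes the two bounds combine.
  have hcoef : (K - 1) * t ≤ (11 / 6 * K * (K - 1) - K * (2 * K / 7 + 1)) * t := by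
    apply mul_le_mul_of_nonneg_right _ ht
    nlinarith
  have hb : (K - 1) * t ≤ (K - 1) * (b * (2 * K ^ 2)) := by
    nlinarith [mul_le_mul_of_nonneg_left ha (by linarith : 0 ≤ K - 1),
      mul_le_mul_of_nonneg_left hab' hK0.le]
  rw [div_le_iff₀ (by positivity)]
  exact le_of_mul_le_mul_left hb (by linarith)

theorem le_card_filter_subset_of_lt_card_crossingSets_sdiff {α : Type*} [DecidableEq α]
    {V W S : Finset α} {E : Finset (Finset α)} {k : ℕ} {ε ϱ : ℝ} (hk : 3 ≤ k)
    (hϱ0 : 0 ≤ ϱ) (hϱ : ϱ < ε / 12) (hεV : 2 * k ≤ ε * #V) (hE : E ⊆ V.powersetCard k)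
    (hdeg : ∀ u ∈ V \ W, ((#V - 1).choose (k - 1) : ℝ) - (#(V \ W) - 1).choose (k - 1) -
      ϱ * #V ^ (k - 1) ≤ #{e ∈ E | u ∈ e})
    (hmiss : ε * #V ^ k < #(crossingSets V W k \ E))
    (hS : (#((V \ W) \ S) : ℝ) ≤ ε * #V / 7 + 1) :
    ε * #V ^ k / (2 * k ^ 2) ≤ #{e ∈ E | e ⊆ S} := by
  have hcross := card_crossingSets_sdiff_le hE (by omega) hdeg
  have hinside : (#{e ∈ E | e ⊆ V \ W} : ℝ) ≤
      #{e ∈ E | e ⊆ S} + #((V \ W) \ S) * (#V - 1).choose (k - 1) := by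
    exact_mod_cast card_filter_subset_le hE sdiff_subset (by omega) S
  have hchoose : ((k : ℝ) - 1) * (#V - 1).choose (k - 1) ≤ (#V : ℝ) ^ (k - 1) := by
    rw [← Nat.cast_pred (by omega : 0 < k)]
    exact_mod_cast (Nat.mul_choose_le_pow _ _).trans (Nat.pow_le_pow_left (Nat.sub_le _ 1) _)
  have hVW : (#(V \ W) : ℝ) ≤ #V := by exact_mod_cast card_le_card sdiff_subset
  have hpow : (#V : ℝ) ^ k = #V * #V ^ (k - 1) := by
    rw [← pow_succ', Nat.sub_add_cancel (by omega)]
  rw [hpow, ← mul_assoc] at hmiss ⊢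
  refine le_of_missing_crossing_bounds (a := #{e ∈ E | e ⊆ V \ W}) (by exact_mod_cast hk) hϱ
    (Nat.cast_nonneg _) (by positivity) hεV ?_ ?_ hchoose
  · nlinarith [mul_le_mul_of_nonneg_right hVW (by positivity : 0 ≤ ϱ * (#V : ℝ) ^ (k - 1))]
  · nlinarith [mul_le_mul_of_nonneg_right hS
      (Nat.cast_nonneg _ : (0 : ℝ) ≤ (#V - 1).choose (k - 1))]

/-- Lemma (large induced subgraphs): let k ≥ 3, 0 < ε < 1/k, 0 < ϱ < ε/12. For
sufficiently large n and n/(2k⁴) ≤ m < n/k, if a k-graph H on n vertices has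
δ₁(H) ≥ C(n−1,k−1) − C(n−m,k−1) − ϱ n^{k−1} and H does not ε-contain H_k(n,m),
then every vertex set S with |S| ≥ (1 − m/n − ε/7)n induces at least
ε n^k/(2k²) edges. -/
theorem induced_edges_of_not_contain (k : ℕ) (hk : 3 ≤ k) (ε ϱ : ℝ)
    (hε : 0 < ε ∧ ε < 1 / (k : ℝ)) (hϱ : 0 < ϱ ∧ ϱ < ε / 12) :
    ∃ n₀ : ℕ, ∀ n m : ℕ, n₀ ≤ n →
      (n : ℝ) / (2 * (k : ℝ) ^ 4) ≤ (m : ℝ) → (m : ℝ) < (n : ℝ) / (k : ℝ) →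
      ∀ E : Finset (Finset ℕ), (∀ e ∈ E, e ⊆ Finset.range n ∧ e.card = k) →
      (∀ v ∈ Finset.range n,
        (Nat.choose (n - 1) (k - 1) : ℝ) - Nat.choose (n - m) (k - 1) - ϱ * (n : ℝ) ^ (k - 1)
          ≤ ((E.filter (fun e => v ∈ e)).card : ℝ)) →
      (¬ ∃ W ⊆ Finset.range n, W.card = m - 1 ∧
        (((((Finset.range n).powersetCard k).filter
            (fun e => 1 ≤ (e ∩ W).card ∧ (e ∩ W).card ≤ k - 1)) \ E).card : ℝ)
          ≤ ε * (n : ℝ) ^ k) →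
      ∀ S ⊆ Finset.range n, (1 - (m : ℝ) / n - ε / 7) * n ≤ (S.card : ℝ) →
        ε * (n : ℝ) ^ k / (2 * (k : ℝ) ^ 2) ≤ ((E.filter (fun e => e ⊆ S)).card : ℝ) := by
  obtain ⟨hε0, -⟩ := hε
  refine ⟨⌈2 * k / ε⌉₊, fun n m hn hm_lo hm_hi E hE hdeg hfree S hS hSbig => ?_⟩
  have hkR : (3 : ℝ) ≤ k := by exact_mod_cast hk
  have hεn : 2 * k ≤ ε * n := by linarith [(div_le_iff₀ hε0).mp (Nat.ceil_le.mp hn)]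
  have hn0 : (0 : ℝ) < n := pos_of_mul_pos_right (by linarith) hε0.le
  have hm : 0 < m := Nat.cast_pos.mp ((div_pos hn0 (by positivity)).trans_le hm_lo)
  have hmn : m < n := by exact_mod_cast hm_hi.trans_le (div_le_self hn0.le (by norm_cast; omega))
  have hSn : #S ≤ n := card_range n ▸ card_le_card hS
  obtain ⟨W, hWV, hW, hSW⟩ := exists_subset_card_eq_card_sdiff_sdiff hS (w := m - 1)
    (by rw [card_range]; omega)
  rw [card_range] at hSW
  have hVW : #(range n \ W) - 1 = n - m := by rw [card_sdiff_of_subset hWV, card_range, hW]; omega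
  have hD : (#((range n \ W) \ S) : ℝ) ≤ ε * n / 7 + 1 := by
    have hSbig' : (n : ℝ) - m - ε * n / 7 ≤ #S := by convert hSbig using 1; field_simp
    rcases (by omega : #((range n \ W) \ S) = 0 ∨ #((range n \ W) \ S) + m + #S = n + 1)
      with h | h
    · rw [h, Nat.cast_zero]; positivity
    · linarith [(by exact_mod_cast h : ((#((range n \ W) \ S) : ℕ) : ℝ) + m + #S = n + 1)]
  simpa only [card_range] using le_card_filter_subset_of_lt_card_crossingSets_sdiff hk hϱ.1.le
    hϱ.2 (by rwa [card_range]) (fun e he => mem_powersetCard.mpr (hE e he))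
    (fun u hu => by rw [card_range, hVW]; exact hdeg u (mem_sdiff.mp hu).1)
    (by rw [card_range]; exact not_le.mp fun h => hfree ⟨W, hWV, hW, h⟩) (by rwa [card_range])
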